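/- Define B(n,k) = (-1)^{n-k} · (k-1)! · S(n,k) for n ≥ 1 and 1 ≤ k ≤ n, where S is the Stirling number of the second kind. Then for all n ≥ 0 and 1 ≤ k ≤ n+1, k · B(n+1,k) = Σ_{ℓ=k-1}^{n} C(n+1,ℓ) · B(ℓ+1,k). -/

import Mathlib

/-- Stirling numbers of the second kind. -/
def stirling : ℕ → ℕ → ℕ
  | 0, 0 => 1
  | 0, _ + 1 => 0
  | _ + 1, 0 => 0
  | n + 1, k + 1 => (k + 1) * stirling n (k + 1) + stirling n k

/-- `B(n,k) = (-1)^(n-k) · (k-1)! · S(n,k)`. -/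
def Bcoeff (n k : ℕ) : ℤ :=
  (-1 : ℤ) ^ (n - k) * ((k - 1).factorial : ℤ) * (stirling n k : ℤ)

/-!
Up to the sign and the factor `(k - 1)!`, `B(ℓ + 1, k)` is `S(ℓ + 1, k)`. Write `g_k ℓ = S(ℓ + 1, k)`.
The recurrence for `S` gives `Δ g_{k+1} = k • g_{k+1} + g_k`, so by induction the `m`-th forward
difference of `g_{k+1}` at `0` is `S(m, k)`. Expanding `Δ^(n+1) g_{k+1} 0` by the binomial formula
and splitting off the top term `S(n + 2, k + 1) = (k + 1) S(n + 1, k + 1) + S(n + 1, k)` leaves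
exactly the alternating binomial sum of the identity.
-/

open Finset Nat Function
open scoped fwdDiff

theorem stirling_eq_stirlingSecond : stirling = stirlingSecond := by
  funext n k
  induction n generalizing k with
  | zero => cases k <;> rfl
  | succ n ih => cases k <;> simp [stirling, stirlingSecond_succ_succ, ih]

theorem fwdDiff_stirlingSecond_succ (k : ℕ) :
    Δ_[1] (fun ℓ ↦ (stirlingSecond (ℓ + 1) (k + 1) : ℤ)) =
      (k : ℤ) • (fun ℓ ↦ (stirlingSecond (ℓ + 1) (k + 1) : ℤ)) +
        fun ℓ ↦ (stirlingSecond (ℓ + 1) k : ℤ) := by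
  ext ℓ
  simp only [fwdDiff, stirlingSecond_succ_succ (ℓ + 1) k, Pi.add_apply, Pi.smul_apply, smul_eq_mul]
  push_cast
  ring

theorem fwdDiff_iter_stirlingSecond_succ_zero (m k : ℕ) :
    (Δ_[1])^[m] (fun ℓ ↦ (stirlingSecond (ℓ + 1) (k + 1) : ℤ)) 0 = stirlingSecond m k := by
  induction m generalizing k with
  | zero => cases k <;> simp [stirlingSecond_succ_succ]
  | succ m ih =>
    rw [iterate_succ_apply, fwdDiff_stirlingSecond_succ, fwdDiff_iter_add,
      fwdDiff_iter_const_smul, Pi.add_apply, Pi.smul_apply, ih, smul_eq_mul]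
    cases k with
    | zero =>
      have hzero : (Δ_[1])^[m] (fun _ : ℕ ↦ (0 : ℤ)) = fun _ ↦ 0 :=
        iterate_fixed (fwdDiff_const (h := 1) 0) m
      simp [hzero]
    | succ k =>
      rw [ih, stirlingSecond_succ_succ]
      push_cast
      ring

theorem sum_range_neg_one_pow_mul_choose_stirlingSecond (n k : ℕ) :
    ∑ ℓ ∈ range (n + 1),
        (-1 : ℤ) ^ (n - ℓ) * (n + 1).choose ℓ * stirlingSecond (ℓ + 1) (k + 1) =
      (k + 1) * stirlingSecond (n + 1) (k + 1) := by
  have hdiff :=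
    fwdDiff_iter_eq_sum_shift 1 (fun ℓ ↦ (stirlingSecond (ℓ + 1) (k + 1) : ℤ)) (n + 1) 0
  simp only [fwdDiff_iter_stirlingSecond_succ_zero, sum_range_succ _ (n + 1), tsub_self, pow_zero,
    choose_self, stirlingSecond_succ_succ (n + 1) k, zero_add, smul_eq_mul, mul_one] at hdiff
  have hsign : ∑ ℓ ∈ range (n + 1),
      (-1 : ℤ) ^ (n + 1 - ℓ) * (n + 1).choose ℓ * stirlingSecond (ℓ + 1) (k + 1) =
        -∑ ℓ ∈ range (n + 1),
          (-1 : ℤ) ^ (n - ℓ) * (n + 1).choose ℓ * stirlingSecond (ℓ + 1) (k + 1) := by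
    rw [← sum_neg_distrib]
    refine sum_congr rfl fun ℓ hℓ ↦ ?_
    rw [Nat.sub_add_comm (mem_range_succ_iff.mp hℓ), pow_succ]
    ring
  push_cast at hdiff
  linarith

theorem sum_Icc_neg_one_pow_mul_choose_stirlingSecond (n k : ℕ) :
    ∑ ℓ ∈ Icc k n,
        (-1 : ℤ) ^ (n - ℓ) * (n + 1).choose ℓ * stirlingSecond (ℓ + 1) (k + 1) =
      (k + 1) * stirlingSecond (n + 1) (k + 1) := by
  rw [← sum_range_neg_one_pow_mul_choose_stirlingSecond]
  refine sum_subset (fun ℓ hℓ ↦ by simp at hℓ ⊢; omega) fun ℓ hℓn hℓk ↦ ?_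
  rw [stirlingSecond_eq_zero_of_lt (by simp at hℓn hℓk; omega)]
  simp

theorem neg_one_pow_sub_eq_mul {j ℓ n : ℕ} (hjℓ : j ≤ ℓ) (hℓn : ℓ ≤ n) :
    (-1 : ℤ) ^ (ℓ - j) = (-1) ^ (n - j) * (-1) ^ (n - ℓ) := by
  rw [← pow_add, show n - j + (n - ℓ) = ℓ - j + 2 * (n - ℓ) by omega, pow_add, pow_mul]
  simp

theorem Bcoeff_identity_general (n k : ℕ) (hk1 : 1 ≤ k) :
    (k : ℤ) * Bcoeff (n + 1) k =
      ∑ ℓ ∈ Finset.Icc (k - 1) n, ((n + 1).choose ℓ : ℤ) * Bcoeff (ℓ + 1) k := by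
  obtain ⟨j, rfl⟩ : ∃ j, k = j + 1 := ⟨k - 1, by omega⟩
  have hterm : ∀ ℓ ∈ Icc j n, ((n + 1).choose ℓ : ℤ) * Bcoeff (ℓ + 1) (j + 1) =
      (-1) ^ (n - j) * j ! *
        ((-1) ^ (n - ℓ) * (n + 1).choose ℓ * stirlingSecond (ℓ + 1) (j + 1)) := by
    intro ℓ hℓ
    rw [mem_Icc] at hℓ
    simp only [Bcoeff, stirling_eq_stirlingSecond, Nat.add_sub_add_right, add_tsub_cancel_right,
      neg_one_pow_sub_eq_mul hℓ.1 hℓ.2]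
    ring
  rw [add_tsub_cancel_right, sum_congr rfl hterm, ← mul_sum,
    sum_Icc_neg_one_pow_mul_choose_stirlingSecond]
  simp only [Bcoeff, stirling_eq_stirlingSecond, Nat.add_sub_add_right, add_tsub_cancel_right]
  push_cast
  ring

theorem Bcoeff_identity (n k : ℕ) (hk1 : 1 ≤ k) (hk2 : k ≤ n + 1) :
    (k : ℤ) * Bcoeff (n + 1) k =
      ∑ ℓ ∈ Finset.Icc (k - 1) n, ((n + 1).choose ℓ : ℤ) * Bcoeff (ℓ + 1) k :=
  Bcoeff_identity_general n k hk1
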